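/- arXiv:1507.02707 — 2 statements merged into one kernel-verified Lean document; each statement's English description precedes it below -/
import Mathlib

section
/- Let (Ω, F, μ) be a probability space with filtration (F_n), let 2 ≤ q < ∞, and let (f_n) be a sequence of nonnegative functions with f_n ∈ L^{q}(Ω). Then ‖Σ_n E[f_n | F_n]‖_q ≤ C_q ‖Σ_n f_n‖_q for a constant C_q depending only on q. -/
open MeasureTheory ENNReal Finset

/-!
Write `S k = ∑_{n<k} 𝔼[f n | ℱ n]`. Convexity of `x ↦ x ^ q` gives
`S (k+1) ^ q - S k ^ q ≤ q S (k+1) ^ (q-1) 𝔼[f k | ℱ k]`, and since `S (k+1)` is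
`ℱ k`-measurable the conditional expectation disappears after integration. As `S` is increasing,
summing over `k` yields `𝔼[S N ^ q] ≤ q 𝔼[S N ^ (q-1) ∑ f n]`, and Hölder's inequality turns this
into `‖S N‖_q ≤ q ‖∑ f n‖_q`; dividing by `‖S N‖_q ^ (q-1)` is legitimate because conditional
expectation is a contraction of `L^q`, so `S N ∈ L^q`.
-/

theorem Real.rpow_sub_rpow_le_mul_rpow_sub {q a b : ℝ} (hq : 1 ≤ q) (hb : 0 ≤ b) (hba : b ≤ a) :
    a ^ q - b ^ q ≤ q * a ^ (q - 1) * (a - b) := by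
  rcases hba.eq_or_lt with rfl | hlt
  · simp
  have hslope := (convexOn_rpow hq).slope_le_of_hasDerivAt hb (Set.mem_Ici.2 (hb.trans hlt.le))
    hlt (Real.hasDerivAt_rpow_const (Or.inr hq))
  rwa [slope_def_field, div_le_iff₀ (sub_pos.2 hlt)] at hslope

theorem Real.rpow_le_of_le_mul_rpow {a d r : ℝ} (ha : 0 ≤ a) (hd : 0 ≤ d) (hr : 0 < r)
    (h : a ≤ d * a ^ (1 - r)) : a ^ r ≤ d := by
  rcases ha.eq_or_lt with rfl | ha
  · rwa [Real.zero_rpow hr.ne']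
  have hsplit : a ^ r * a ^ (1 - r) = a := by
    rw [← Real.rpow_add ha, add_sub_cancel, Real.rpow_one]
  exact le_of_mul_le_mul_right (hsplit.trans_le h) (Real.rpow_pos_of_pos ha _)

namespace MeasureTheory

variable {Ω : Type*} {m0 : MeasurableSpace Ω} {μ : Measure Ω}

theorem MemLp.rpow_ofReal_div {u : Ω → ℝ} {p r : ℝ} (hr : 0 < r)
    (hu : MemLp u (ENNReal.ofReal p) μ) : MemLp (fun ω => u ω ^ r) (ENNReal.ofReal (p / r)) μ := by
  have h := hu.norm_rpow_div (ENNReal.ofReal r)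
  rw [ENNReal.toReal_ofReal hr.le, ← ENNReal.ofReal_div_of_pos hr] at h
  refine h.mono (hu.1.aemeasurable.pow_const r).aestronglyMeasurable (ae_of_all _ fun ω => ?_)
  simpa [Real.norm_eq_abs, abs_of_nonneg (Real.rpow_nonneg (abs_nonneg (u ω)) r)]
    using Real.abs_rpow_le_abs_rpow (u ω) r

theorem MemLp.integrable_rpow {u : Ω → ℝ} {q : ℝ} (hq : 0 < q)
    (hu : MemLp u (ENNReal.ofReal q) μ) : Integrable (fun ω => u ω ^ q) μ := by
  have h := hu.rpow_ofReal_div hq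
  rw [div_self hq.ne', ENNReal.ofReal_one] at h
  exact memLp_one_iff_integrable.1 h

theorem MemLp.integrable_rpow_sub_one_mul {u v : Ω → ℝ} {q : ℝ} (hq : 1 < q)
    (hu : MemLp u (ENNReal.ofReal q) μ) (hv : MemLp v (ENNReal.ofReal q) μ) :
    Integrable (fun ω => u ω ^ (q - 1) * v ω) μ := by
  have hconj : (q / (q - 1)).HolderConjugate q :=
    (Real.HolderConjugate.conjExponent hq).symm
  have := hconj.ennrealOfReal
  exact (hu.rpow_ofReal_div (sub_pos.2 hq)).integrable_mul hv

theorem integral_mul_condExp_of_stronglyMeasurable {m : MeasurableSpace Ω} (hm : m ≤ m0)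
    [SigmaFinite (μ.trim hm)] {φ f : Ω → ℝ} (hφ : StronglyMeasurable[m] φ)
    (hφf : Integrable (φ * f) μ) (hf : Integrable f μ) :
    ∫ ω, φ ω * μ[f|m] ω ∂μ = ∫ ω, φ ω * f ω ∂μ :=
  calc ∫ ω, φ ω * μ[f|m] ω ∂μ = ∫ ω, μ[φ * f|m] ω ∂μ :=
        integral_congr_ae (condExp_mul_of_stronglyMeasurable_left hφ hφf hf).symm
    _ = ∫ ω, φ ω * f ω ∂μ := integral_condExp hm

theorem eLpNorm_ofReal_eq_integral_rpow {G : Ω → ℝ} {q : ℝ} (hq : 0 < q) (hG0 : 0 ≤ᵐ[μ] G)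
    (hG : MemLp G (ENNReal.ofReal q) μ) :
    eLpNorm G (ENNReal.ofReal q) μ = ENNReal.ofReal ((∫ ω, G ω ^ q ∂μ) ^ (1 / q)) := by
  rw [hG.eLpNorm_eq_integral_rpow_norm (by simpa using hq) ENNReal.ofReal_ne_top,
    ENNReal.toReal_ofReal hq.le, one_div]
  congr 2
  refine integral_congr_ae ?_
  filter_upwards [hG0] with ω hω
  rw [Real.norm_of_nonneg hω]

theorem eLpNorm_le_mul_eLpNorm_of_integral_rpow_le {G F : Ω → ℝ} {q C : ℝ} (hq : 1 < q)
    (hC : 0 ≤ C) (hG0 : 0 ≤ᵐ[μ] G) (hF0 : 0 ≤ᵐ[μ] F) (hG : MemLp G (ENNReal.ofReal q) μ)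
    (hF : MemLp F (ENNReal.ofReal q) μ)
    (h : ∫ ω, G ω ^ q ∂μ ≤ C * ∫ ω, G ω ^ (q - 1) * F ω ∂μ) :
    eLpNorm G (ENNReal.ofReal q) μ ≤ ENNReal.ofReal C * eLpNorm F (ENNReal.ofReal q) μ := by
  have hq0 : 0 < q := by linarith
  set A := ∫ ω, G ω ^ q ∂μ
  set B := ∫ ω, F ω ^ q ∂μ
  have hA : 0 ≤ A :=
    integral_nonneg_of_ae (by filter_upwards [hG0] with ω hω using Real.rpow_nonneg hω q)
  have hB : 0 ≤ B :=
    integral_nonneg_of_ae (by filter_upwards [hF0] with ω hω using Real.rpow_nonneg hω q)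
  have hGpow : ∫ ω, (G ω ^ (q - 1)) ^ (q / (q - 1)) ∂μ = A := by
    refine integral_congr_ae ?_
    filter_upwards [hG0] with ω hω
    rw [← Real.rpow_mul hω, mul_div_cancel₀ _ (by linarith : q - 1 ≠ 0)]
  have hholder : ∫ ω, G ω ^ (q - 1) * F ω ∂μ ≤ A ^ (1 - 1 / q) * B ^ (1 / q) := by
    have hconj : (q / (q - 1)).HolderConjugate q :=
      (Real.HolderConjugate.conjExponent hq).symm
    have := integral_mul_le_Lp_mul_Lq_of_nonneg hconj
      (by filter_upwards [hG0] with ω hω using Real.rpow_nonneg hω _) hF0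
      (hG.rpow_ofReal_div (by linarith)) hF
    rwa [hGpow, show 1 / (q / (q - 1)) = 1 - 1 / q by field_simp] at this
  have hAB : A ^ (1 / q) ≤ C * B ^ (1 / q) := by
    refine Real.rpow_le_of_le_mul_rpow hA (by positivity) (one_div_pos.2 hq0) ?_
    calc A ≤ C * ∫ ω, G ω ^ (q - 1) * F ω ∂μ := h
      _ ≤ C * (A ^ (1 - 1 / q) * B ^ (1 / q)) := by gcongr
      _ = C * B ^ (1 / q) * A ^ (1 - 1 / q) := by ring
  rw [eLpNorm_ofReal_eq_integral_rpow hq0 hG0 hG, eLpNorm_ofReal_eq_integral_rpow hq0 hF0 hF,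
    ← ENNReal.ofReal_mul hC]
  exact ENNReal.ofReal_le_ofReal hAB

noncomputable def condExpPartialSum (μ : Measure Ω) (ℱ : Filtration ℕ m0) (f : ℕ → Ω → ℝ)
    (k : ℕ) : Ω → ℝ :=
  fun ω => ∑ n ∈ Finset.range k, μ[f n|ℱ n] ω

section condExpPartialSum

variable {ℱ : Filtration ℕ m0} {f : ℕ → Ω → ℝ}

@[simp]
theorem condExpPartialSum_zero : condExpPartialSum μ ℱ f 0 = 0 := by
  ext ω; simp [condExpPartialSum]

theorem condExpPartialSum_succ (k : ℕ) (ω : Ω) :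
    condExpPartialSum μ ℱ f (k + 1) ω = condExpPartialSum μ ℱ f k ω + μ[f k|ℱ k] ω :=
  Finset.sum_range_succ _ _

theorem stronglyMeasurable_condExpPartialSum_succ (k : ℕ) :
    StronglyMeasurable[ℱ k] (condExpPartialSum μ ℱ f (k + 1)) :=
  Finset.stronglyMeasurable_fun_sum _ fun _ hn =>
    stronglyMeasurable_condExp.mono (ℱ.mono (Finset.mem_range_succ_iff.1 hn))

theorem ae_monotone_condExpPartialSum (hf : ∀ n, 0 ≤ᵐ[μ] f n) :
    ∀ᵐ ω ∂μ, Monotone fun k => condExpPartialSum μ ℱ f k ω := by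
  filter_upwards [ae_all_iff.2 fun n => condExp_nonneg (m := ℱ n) (hf n)] with ω hω
  exact monotone_nat_of_le_succ fun k => by simpa [condExpPartialSum_succ] using hω k

theorem ae_nonneg_condExpPartialSum (hf : ∀ n, 0 ≤ᵐ[μ] f n) :
    ∀ᵐ ω ∂μ, ∀ k, 0 ≤ condExpPartialSum μ ℱ f k ω := by
  filter_upwards [ae_monotone_condExpPartialSum hf] with ω hω k
  simpa using hω (Nat.zero_le k)

theorem memLp_condExpPartialSum [IsFiniteMeasure μ] {p : ℝ≥0∞} (hp : 1 ≤ p)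
    (hf : ∀ n, MemLp (f n) p μ) (k : ℕ) : MemLp (condExpPartialSum μ ℱ f k) p μ :=
  memLp_finsetSum _ fun _ _ => (hf _).condExp hp

variable [IsFiniteMeasure μ] {q : ℝ}

local notation "S" => condExpPartialSum μ ℱ f

theorem integral_rpow_condExpPartialSum_succ_sub_le (hq : 1 < q) (hf0 : ∀ n, 0 ≤ᵐ[μ] f n)
    (hf : ∀ n, MemLp (f n) (ENNReal.ofReal q) μ) {k N : ℕ} (hkN : k < N) :
    ∫ ω, S (k + 1) ω ^ q ∂μ - ∫ ω, S k ω ^ q ∂μ ≤ q * ∫ ω, S N ω ^ (q - 1) * f k ω ∂μ := by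
  have hq1 : 1 ≤ ENNReal.ofReal q := ENNReal.one_le_ofReal.2 hq.le
  have hS := memLp_condExpPartialSum (ℱ := ℱ) hq1 hf
  have hS_int : ∀ j, Integrable (fun ω => S j ω ^ q) μ := fun j =>
    (hS j).integrable_rpow (by linarith)
  have hmono := ae_monotone_condExpPartialSum (ℱ := ℱ) hf0
  have hnonneg := ae_nonneg_condExpPartialSum (ℱ := ℱ) hf0
  have hconvex : ∀ᵐ ω ∂μ,
      S (k + 1) ω ^ q - S k ω ^ q ≤ q * (S (k + 1) ω ^ (q - 1) * μ[f k|ℱ k] ω) := by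
    filter_upwards [hmono, hnonneg] with ω hω hω0
    have hdiff : S (k + 1) ω - S k ω = μ[f k|ℱ k] ω := by rw [condExpPartialSum_succ]; ring
    have := Real.rpow_sub_rpow_le_mul_rpow_sub hq.le (hω0 k) (hω k.le_succ)
    rwa [hdiff, mul_assoc] at this
  have hpull : ∫ ω, S (k + 1) ω ^ (q - 1) * μ[f k|ℱ k] ω ∂μ
      = ∫ ω, S (k + 1) ω ^ (q - 1) * f k ω ∂μ :=
    integral_mul_condExp_of_stronglyMeasurable (ℱ.le k)
      ((stronglyMeasurable_condExpPartialSum_succ k).measurable.pow_const _).stronglyMeasurable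
      ((hS (k + 1)).integrable_rpow_sub_one_mul hq (hf k)) ((hf k).integrable hq1)
  have hgrow : ∫ ω, S (k + 1) ω ^ (q - 1) * f k ω ∂μ ≤ ∫ ω, S N ω ^ (q - 1) * f k ω ∂μ := by
    refine integral_mono_ae ((hS (k + 1)).integrable_rpow_sub_one_mul hq (hf k))
      ((hS N).integrable_rpow_sub_one_mul hq (hf k)) ?_
    filter_upwards [hmono, hnonneg, hf0 k] with ω hω hω0 hfω
    exact mul_le_mul_of_nonneg_right (Real.rpow_le_rpow (hω0 _) (hω hkN) (by linarith)) hfω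
  calc ∫ ω, S (k + 1) ω ^ q ∂μ - ∫ ω, S k ω ^ q ∂μ
      = ∫ ω, (S (k + 1) ω ^ q - S k ω ^ q) ∂μ := (integral_sub (hS_int _) (hS_int _)).symm
    _ ≤ ∫ ω, q * (S (k + 1) ω ^ (q - 1) * μ[f k|ℱ k] ω) ∂μ :=
        integral_mono_ae ((hS_int _).sub (hS_int _))
          (((hS _).integrable_rpow_sub_one_mul hq ((hf k).condExp hq1)).const_mul q) hconvex
    _ = q * ∫ ω, S (k + 1) ω ^ (q - 1) * f k ω ∂μ := by rw [integral_const_mul, hpull]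
    _ ≤ q * ∫ ω, S N ω ^ (q - 1) * f k ω ∂μ := by gcongr

theorem integral_rpow_condExpPartialSum_le (hq : 1 < q) (hf0 : ∀ n, 0 ≤ᵐ[μ] f n)
    (hf : ∀ n, MemLp (f n) (ENNReal.ofReal q) μ) (N : ℕ) :
    ∫ ω, S N ω ^ q ∂μ ≤ q * ∫ ω, S N ω ^ (q - 1) * ∑ n ∈ Finset.range N, f n ω ∂μ := by
  have hS := memLp_condExpPartialSum (ℱ := ℱ) (ENNReal.one_le_ofReal.2 hq.le) hf
  calc ∫ ω, S N ω ^ q ∂μ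
      = ∑ k ∈ Finset.range N, (∫ ω, S (k + 1) ω ^ q ∂μ - ∫ ω, S k ω ^ q ∂μ) := by
        rw [Finset.sum_range_sub (fun k => ∫ ω, S k ω ^ q ∂μ)]
        simp [Real.zero_rpow (by linarith : q ≠ 0)]
    _ ≤ ∑ k ∈ Finset.range N, q * ∫ ω, S N ω ^ (q - 1) * f k ω ∂μ :=
        Finset.sum_le_sum fun k hk =>
          integral_rpow_condExpPartialSum_succ_sub_le hq hf0 hf (Finset.mem_range.1 hk)
    _ = q * ∫ ω, S N ω ^ (q - 1) * ∑ n ∈ Finset.range N, f n ω ∂μ := by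
        rw [← Finset.mul_sum, ← integral_finsetSum _ fun k _ =>
          (hS N).integrable_rpow_sub_one_mul hq (hf k)]
        simp only [Finset.mul_sum]

end condExpPartialSum

end MeasureTheory

/-- The commutative dual Doob inequality: for `2 ≤ q < ∞` there is a constant `C_q`,
depending only on `q`, such that for any probability space with filtration `ℱ` and any
finite sequence of nonnegative functions `f_n ∈ L^q`,
`‖Σ_n E[f_n | ℱ n]‖_q ≤ C_q ‖Σ_n f_n‖_q`. -/
theorem stmt_6 (q : ℝ) (hq : 2 ≤ q) :
    ∃ C : ℝ, 0 < C ∧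
      ∀ (Ω : Type) (m : MeasurableSpace Ω) (μ : Measure Ω), IsProbabilityMeasure μ →
        ∀ (ℱ : Filtration ℕ m) (f : ℕ → Ω → ℝ) (N : ℕ),
          (∀ n, 0 ≤ f n) → (∀ n, MemLp (f n) (ENNReal.ofReal q) μ) →
          eLpNorm (fun ω => ∑ n ∈ Finset.range N, (μ[f n|ℱ n]) ω) (ENNReal.ofReal q) μ
            ≤ ENNReal.ofReal C *
              eLpNorm (fun ω => ∑ n ∈ Finset.range N, f n ω) (ENNReal.ofReal q) μ := by
  refine ⟨q, by linarith, fun Ω m μ _ ℱ f N hf0 hf => ?_⟩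
  have hq1 : 1 < q := by linarith
  have hf0ae : ∀ n, 0 ≤ᵐ[μ] f n := fun n => ae_of_all _ (hf0 n)
  exact eLpNorm_le_mul_eLpNorm_of_integral_rpow_le hq1 (by linarith)
    (by filter_upwards [ae_nonneg_condExpPartialSum (ℱ := ℱ) hf0ae] with ω hω using hω N)
    (ae_of_all _ fun ω => Finset.sum_nonneg fun n _ => hf0 n ω)
    (memLp_condExpPartialSum (ENNReal.one_le_ofReal.2 hq1.le) hf N)
    (memLp_finsetSum _ fun n _ => hf n)
    (integral_rpow_condExpPartialSum_le hq1 hf0ae hf N)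
end

section
/- Let 1 ≤ p ≤ 2 with 1/p = 1/2 + 1/q, let (a_n^j)_{j,m} be functions with Σ_j λ_j Σ_n ‖a_n^j‖₂² ≤ 1 and (b_n^j) functions with ‖(Σ_n |b_n^j|²)^{1/2}‖_q ≤ 1 for each j, where λ_j ≥ 0 and Σ_j λ_j = 1. Define b_n = (Σ_j λ_j |b_n^j|²)^{1/2} and a_n = Σ_j λ_j a_n^j b_n^j / b_n (interpreted as 0 where b_n = 0). Then Σ_n ‖a_n‖₂² ≤ 1 and ‖(Σ_n |b_n|²)^{1/2}‖_q ≤ 1, and Σ_n a_n b_n = Σ_j λ_j Σ_n a_n^j b_n^j. -/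
/-!
Pointwise, `A_n B_n = Σ_j λ_j a_n^j b_n^j` and, by the weighted Cauchy–Schwarz inequality,
`(Σ_j λ_j a_n^j b_n^j)² ≤ (Σ_j λ_j (a_n^j)²) B_n²`, so `A_n² ≤ Σ_j λ_j (a_n^j)²`
(the same inequality forces `Σ_j λ_j a_n^j b_n^j = 0` where `B_n = 0`); integrating gives the
`L²` bound. For the square function, `Σ_n B_n² = Σ_j λ_j Σ_n (b_n^j)²` is a convex combination, and
`‖S^{1/2}‖_q ≤ 1 ↔ ‖S‖_{q/2} ≤ 1`; since `q ≥ 2`, the unit ball of `L^{q/2}` is convex.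
-/

open MeasureTheory ENNReal Finset

theorem sum_weighted_mul_sq_le {ι : Type*} (s : Finset ι) {w : ι → ℝ} (hw : ∀ i ∈ s, 0 ≤ w i)
    (x y : ι → ℝ) :
    (∑ i ∈ s, w i * x i * y i) ^ 2 ≤ (∑ i ∈ s, w i * x i ^ 2) * ∑ i ∈ s, w i * y i ^ 2 :=
  sum_sq_le_sum_mul_sum_of_sq_le_mul s (fun i hi => mul_nonneg (hw i hi) (sq_nonneg _))
    (fun i hi => mul_nonneg (hw i hi) (sq_nonneg _)) fun i _ => le_of_eq (by ring)

section DivisionByZero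

variable {S T β : ℝ}

theorem ite_div_mul_cancel_of_sq_le (h : S ^ 2 ≤ T * β ^ 2) :
    (if β = 0 then 0 else S / β) * β = S := by
  split_ifs with hβ
  · subst hβ
    rw [zero_mul, eq_comm, ← sq_eq_zero_iff]
    exact le_antisymm (by simpa using h) (sq_nonneg S)
  · exact div_mul_cancel₀ S hβ

theorem ite_div_sq_le_of_sq_le (hT : 0 ≤ T) (h : S ^ 2 ≤ T * β ^ 2) :
    (if β = 0 then 0 else S / β) ^ 2 ≤ T := by
  split_ifs with hβ
  · simpa using hT
  · rwa [div_pow, div_le_iff₀ (by positivity)]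

end DivisionByZero

section Lebesgue

variable {Ω : Type*} {m : MeasurableSpace Ω} {μ : Measure Ω}

theorem sum_integral_sq_le_of_sq_le_weighted {ι κ : Type*} (s : Finset ι) (t : Finset κ)
    (lam : ι → ℝ) {a : ι → κ → Ω → ℝ} {A : κ → Ω → ℝ}
    (ha : ∀ j ∈ s, ∀ n ∈ t, MemLp (a j n) 2 μ)
    (hA : ∀ n ∈ t, ∀ ω, A n ω ^ 2 ≤ ∑ j ∈ s, lam j * a j n ω ^ 2) :
    ∑ n ∈ t, ∫ ω, A n ω ^ 2 ∂μ ≤ ∑ j ∈ s, lam j * ∑ n ∈ t, ∫ ω, a j n ω ^ 2 ∂μ := by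
  have hint : ∀ n ∈ t, ∀ j ∈ s, Integrable (fun ω => lam j * a j n ω ^ 2) μ :=
    fun n hn j hj => (ha j hj n hn).integrable_sq.const_mul _
  calc ∑ n ∈ t, ∫ ω, A n ω ^ 2 ∂μ
      ≤ ∑ n ∈ t, ∫ ω, ∑ j ∈ s, lam j * a j n ω ^ 2 ∂μ :=
        sum_le_sum fun n hn => integral_mono_of_nonneg (.of_forall fun _ => sq_nonneg _)
          (integrable_finsetSum _ (hint n hn)) (.of_forall (hA n hn))
    _ = ∑ n ∈ t, ∑ j ∈ s, lam j * ∫ ω, a j n ω ^ 2 ∂μ :=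
        sum_congr rfl fun n hn => by
          rw [integral_finsetSum _ (hint n hn)]
          exact sum_congr rfl fun j _ => integral_const_mul _ _
    _ = ∑ j ∈ s, lam j * ∑ n ∈ t, ∫ ω, a j n ω ^ 2 ∂μ := by
        rw [sum_comm]
        simp_rw [mul_sum]

theorem eLpNorm_sum_smul_le_one {E ι : Type*} [NormedAddCommGroup E] [NormedSpace ℝ E]
    {r : ℝ≥0∞} (hr : 1 ≤ r) (s : Finset ι) {lam : ι → ℝ} (hlam0 : ∀ j ∈ s, 0 ≤ lam j)
    (hlam1 : ∑ j ∈ s, lam j = 1) {g : ι → Ω → E}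
    (hg : ∀ j ∈ s, AEStronglyMeasurable (g j) μ) (hg1 : ∀ j ∈ s, eLpNorm (g j) r μ ≤ 1) :
    eLpNorm (∑ j ∈ s, lam j • g j) r μ ≤ 1 :=
  calc eLpNorm (∑ j ∈ s, lam j • g j) r μ
      ≤ ∑ j ∈ s, eLpNorm (lam j • g j) r μ :=
        eLpNorm_sum_le (fun j hj => (hg j hj).const_smul _) hr
    _ = ∑ j ∈ s, ENNReal.ofReal (lam j) * eLpNorm (g j) r μ :=
        sum_congr rfl fun j hj => by
          rw [eLpNorm_const_smul, Real.enorm_eq_ofReal (hlam0 j hj)]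
    _ ≤ ∑ j ∈ s, ENNReal.ofReal (lam j) * 1 :=
        sum_le_sum fun j hj => mul_le_mul_right (hg1 j hj) _
    _ = 1 := by
        simp only [mul_one]
        rw [← ENNReal.ofReal_sum_of_nonneg hlam0, hlam1, ENNReal.ofReal_one]

theorem eLpNorm_rpow_half_le_one_iff {f : Ω → ℝ} (hf : ∀ ω, 0 ≤ f ω) (r : ℝ≥0∞) :
    eLpNorm (fun ω => f ω ^ (1 / 2 : ℝ)) r μ ≤ 1 ↔ eLpNorm f (r / 2) μ ≤ 1 := by
  have h := eLpNorm_norm_rpow (p := r) (μ := μ) f (by norm_num : (0 : ℝ) < 1 / 2)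
  have hhalf : r * ENNReal.ofReal (1 / 2) = r / 2 := by
    rw [one_div, ENNReal.ofReal_inv_of_pos two_pos, ofReal_ofNat, div_eq_mul_inv]
  simp only [Real.norm_of_nonneg (hf _)] at h
  rw [h, hhalf]
  simpa using ENNReal.rpow_le_rpow_iff (x := eLpNorm f (r / 2) μ) (y := 1) (z := 1 / 2)
    (by norm_num)

end Lebesgue

theorem eq_zero_or_two_le_of_one_div_eq {p q : ℝ} (hp1 : 1 ≤ p) (hp2 : p ≤ 2)
    (hpq : 1 / p = 1 / 2 + 1 / q) : q = 0 ∨ 2 ≤ q := by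
  have hp_ge : 1 / 2 ≤ 1 / p := one_div_le_one_div_of_le (by linarith) hp2
  have hp_le : 1 / p ≤ 1 / 1 := one_div_le_one_div_of_le one_pos hp1
  rcases eq_or_ne q 0 with hq | hq
  · exact .inl hq
  have hq_pos : 0 < q := (one_div_nonneg.1 (by linarith)).lt_of_ne' hq
  exact .inr ((one_div_le_one_div hq_pos two_pos).1 (by linarith))

theorem stmt_9_general {Ω : Type*} {m : MeasurableSpace Ω} (μ : Measure Ω)
    (p q : ℝ) (hp1 : 1 ≤ p) (hp2 : p ≤ 2) (hpq : 1 / p = 1 / 2 + 1 / q)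
    (J N : ℕ) (lam : ℕ → ℝ) (a b : ℕ → ℕ → Ω → ℝ)
    (hlam0 : ∀ j, 0 ≤ lam j) (hlam1 : ∑ j ∈ Finset.range J, lam j = 1)
    (ha : ∑ j ∈ Finset.range J, lam j * ∑ n ∈ Finset.range N, ∫ ω, (a j n ω) ^ 2 ∂μ ≤ 1)
    (hb : ∀ j ∈ Finset.range J,
      eLpNorm (fun ω => (∑ n ∈ Finset.range N, (b j n ω) ^ 2) ^ ((1 : ℝ) / 2))
        (ENNReal.ofReal q) μ ≤ 1)
    (haL2 : ∀ j n, MemLp (a j n) 2 μ)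
    (hbLq : ∀ j n, MemLp (b j n) (ENNReal.ofReal q) μ)
    (B A : ℕ → Ω → ℝ)
    (hB : ∀ n ω, B n ω = (∑ j ∈ Finset.range J, lam j * (b j n ω) ^ 2) ^ ((1 : ℝ) / 2))
    (hA : ∀ n ω, A n ω = if B n ω = 0 then 0
      else (∑ j ∈ Finset.range J, lam j * a j n ω * b j n ω) / B n ω) :
    (∑ n ∈ Finset.range N, ∫ ω, (A n ω) ^ 2 ∂μ ≤ 1) ∧
    eLpNorm (fun ω => (∑ n ∈ Finset.range N, (B n ω) ^ 2) ^ ((1 : ℝ) / 2))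
        (ENNReal.ofReal q) μ ≤ 1 ∧
    ∀ ω, ∑ n ∈ Finset.range N, A n ω * B n ω
        = ∑ j ∈ Finset.range J, lam j * ∑ n ∈ Finset.range N, a j n ω * b j n ω := by
  have hB_sq : ∀ n ω, B n ω ^ 2 = ∑ j ∈ range J, lam j * b j n ω ^ 2 := fun n ω => by
    rw [hB, ← Real.sqrt_eq_rpow,
      Real.sq_sqrt (sum_nonneg fun j _ => mul_nonneg (hlam0 j) (sq_nonneg _))]
  have hCS : ∀ n ω, (∑ j ∈ range J, lam j * a j n ω * b j n ω) ^ 2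
      ≤ (∑ j ∈ range J, lam j * a j n ω ^ 2) * B n ω ^ 2 := fun n ω => by
    rw [hB_sq]
    exact sum_weighted_mul_sq_le _ (fun j _ => hlam0 j) _ _
  have hA_sq : ∀ n ω, A n ω ^ 2 ≤ ∑ j ∈ range J, lam j * a j n ω ^ 2 := fun n ω => by
    rw [hA]
    exact ite_div_sq_le_of_sq_le (sum_nonneg fun j _ => mul_nonneg (hlam0 j) (sq_nonneg _))
      (hCS n ω)
  have hAB : ∀ n ω, A n ω * B n ω = ∑ j ∈ range J, lam j * a j n ω * b j n ω := fun n ω => by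
    rw [hA]
    exact ite_div_mul_cancel_of_sq_le (hCS n ω)
  refine ⟨(sum_integral_sq_le_of_sq_le_weighted _ _ lam (fun j _ n _ => haL2 j n)
    fun n _ => hA_sq n).trans ha, ?_, fun ω => ?_⟩
  · -- `q = 0` is the junk value `1 / 0 = 0` at `p = 2`; then `ofReal q = 0` and `eLpNorm` vanishes.
    rcases eq_zero_or_two_le_of_one_div_eq hp1 hp2 hpq with rfl | hq
    · simp
    have hr : 1 ≤ ENNReal.ofReal q / 2 :=
      (ENNReal.le_div_iff_mul_le (.inl two_ne_zero) (.inl ofNat_ne_top)).2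
        (by simpa using ENNReal.ofReal_le_ofReal hq)
    have hsq : (fun ω => ∑ n ∈ range N, B n ω ^ 2)
        = ∑ j ∈ range J, lam j • fun ω => ∑ n ∈ range N, b j n ω ^ 2 := by
      ext ω
      simp [hB_sq, sum_comm (s := range N), mul_sum]
    have hS_nonneg {c : ℕ → Ω → ℝ} (ω : Ω) : 0 ≤ ∑ n ∈ range N, c n ω ^ 2 :=
      sum_nonneg fun n _ => sq_nonneg _
    rw [eLpNorm_rpow_half_le_one_iff hS_nonneg, hsq]
    exact eLpNorm_sum_smul_le_one hr _ (fun j _ => hlam0 j) hlam1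
      (fun j _ => Finset.aestronglyMeasurable_fun_sum _ fun n _ => (hbLq j n).1.pow 2)
      fun j hj => (eLpNorm_rpow_half_le_one_iff hS_nonneg _).1 (hb j hj)
  · simp_rw [hAB, mul_sum, mul_assoc]
    exact sum_comm

/-- Commutative version of Lemma 2.1: a convex combination of algebraic `h_p^c`-atoms
can be rewritten as a single atom.  Here `1 ≤ p ≤ 2`, `1/p = 1/2 + 1/q`,
`λ_j ≥ 0` with `Σ_j λ_j = 1`, `Σ_j λ_j Σ_n ‖a_n^j‖₂² ≤ 1`, and
`‖(Σ_n |b_n^j|²)^{1/2}‖_q ≤ 1` for each `j`.  Setting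
`b_n = (Σ_j λ_j |b_n^j|²)^{1/2}` and `a_n = Σ_j λ_j a_n^j b_n^j / b_n` (zero where
`b_n = 0`), one has `Σ_n ‖a_n‖₂² ≤ 1`, `‖(Σ_n |b_n|²)^{1/2}‖_q ≤ 1` and
`Σ_n a_n b_n = Σ_j λ_j Σ_n a_n^j b_n^j`. -/
theorem stmt_9 {Ω : Type*} {m : MeasurableSpace Ω} (μ : Measure Ω) [SigmaFinite μ]
    (p q : ℝ) (hp1 : 1 ≤ p) (hp2 : p ≤ 2) (hpq : 1 / p = 1 / 2 + 1 / q)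
    (J N : ℕ) (lam : ℕ → ℝ) (a b : ℕ → ℕ → Ω → ℝ)
    (hlam0 : ∀ j, 0 ≤ lam j) (hlam1 : ∑ j ∈ Finset.range J, lam j = 1)
    (ha : ∑ j ∈ Finset.range J, lam j * ∑ n ∈ Finset.range N, ∫ ω, (a j n ω) ^ 2 ∂μ ≤ 1)
    (hb : ∀ j ∈ Finset.range J,
      eLpNorm (fun ω => (∑ n ∈ Finset.range N, (b j n ω) ^ 2) ^ ((1 : ℝ) / 2))
        (ENNReal.ofReal q) μ ≤ 1)
    (haL2 : ∀ j n, MemLp (a j n) 2 μ)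
    (hbLq : ∀ j n, MemLp (b j n) (ENNReal.ofReal q) μ)
    (B A : ℕ → Ω → ℝ)
    (hB : ∀ n ω, B n ω = (∑ j ∈ Finset.range J, lam j * (b j n ω) ^ 2) ^ ((1 : ℝ) / 2))
    (hA : ∀ n ω, A n ω = if B n ω = 0 then 0
      else (∑ j ∈ Finset.range J, lam j * a j n ω * b j n ω) / B n ω) :
    (∑ n ∈ Finset.range N, ∫ ω, (A n ω) ^ 2 ∂μ ≤ 1) ∧
    eLpNorm (fun ω => (∑ n ∈ Finset.range N, (B n ω) ^ 2) ^ ((1 : ℝ) / 2))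
        (ENNReal.ofReal q) μ ≤ 1 ∧
    ∀ ω, ∑ n ∈ Finset.range N, A n ω * B n ω
        = ∑ j ∈ Finset.range J, lam j * ∑ n ∈ Finset.range N, a j n ω * b j n ω :=
  stmt_9_general (m := m) μ p q hp1 hp2 hpq J N lam a b hlam0 hlam1 ha hb haL2 hbLq B A hB hA
end
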